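/- Let k ≥ 2 and let L ⊆ (Σ_k²)^* be a regular language (accepted by a DFA with n states) such that [π₂(x)]_k > 0 for all x ∈ L. Let α = sup { quo_k(x) : x ∈ L } and suppose α < ∞. Then α is rational. Moreover, α lies in the finite set S₁ ∪ S₂, where S₁ = { quo_k(x) : x ∈ L, |x| < n } and S₂ = { ([π₁(uv)]_k − [π₁(u)]_k) / ([π₂(uv)]_k − [π₂(u)]_k) : |uv| ≤ n, |v| ≥ 1, ∃w, uvw ∈ L, and [π₂(uv)]_k > [π₂(u)]_k }. -/

import Mathlib

/-- The base-k value of a word of digits, most significant digit first. -/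
def baseVal (k : ℕ) (w : List (Fin k)) : ℕ :=
  w.foldl (fun acc d => acc * k + d.val) 0

/-- The quotient of the base-k values of the two coordinates of a word over Σ_k². -/
noncomputable def quoVal (k : ℕ) (x : List (Fin k × Fin k)) : ℝ :=
  (baseVal k (x.map Prod.fst) : ℝ) / (baseVal k (x.map Prod.snd) : ℝ)

/-!
Every quotient over `L` is dominated by a quotient from the finite candidate set `S₁ ∪ S₂` that is
itself at most `α`; hence `α` is the largest candidate not exceeding `α`, a quotient of integers.
Domination is proved by induction on length. A word `x ∈ L` of length at least `n` pumps as
`x = uvw` with `uvⁱw ∈ L` for all `i`. Passing from `uvⁱw` to `uvⁱ⁺¹w` adds `p·kᵐ` to the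
numerator and `q·kᵐ` to the denominator, where `p/q` is the slope of the loop `v` after `u` and
`m = |vⁱw|`; since the quotients stay below `α` for every `i`, this forces `p ≤ α·q`. So `quo(x)`,
the mediant of `quo(uw)` and `p/q`, is at most `quo(uw)` (if `q = 0`) or `max (quo(uw), p/q)`, and
the induction hypothesis applies to the shorter word `uw`.
-/

open Computability

theorem nonpos_of_bddAbove_of_eq_add_mul {D c : ℕ → ℝ} {r : ℝ} (hD : BddAbove (Set.range D))
    (hc : ∀ i, 1 ≤ c i) (hstep : ∀ i, D (i + 1) = D i + r * c i) : r ≤ 0 := by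
  by_contra! hr
  have hgrow : ∀ i : ℕ, D 0 + i * r ≤ D i := by
    intro i
    induction i with
    | zero => simp
    | succ i ih => rw [hstep]; push_cast; nlinarith [hc i]
  obtain ⟨B, hB⟩ := hD
  obtain ⟨i, hi⟩ := exists_nat_gt ((B - D 0) / r)
  rw [div_lt_iff₀ hr] at hi
  linarith [hgrow i, hB ⟨i, rfl⟩]

theorem add_div_add_le_max {K : Type*} [Field K] [LinearOrder K] [IsStrictOrderedRing K]
    {a b p q : K} (hb : 0 < b) (hq : 0 < q) : (a + p) / (b + q) ≤ max (a / b) (p / q) := by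
  have ha : a ≤ max (a / b) (p / q) * b := (div_le_iff₀ hb).1 (le_max_left _ _)
  have hp : p ≤ max (a / b) (p / q) * q := (div_le_iff₀ hq).1 (le_max_right _ _)
  rw [div_le_iff₀ (add_pos hb hq)]
  linarith

theorem Language.append_flatten_replicate_append_mem {A : Type*} {l : Language A} {u v w : List A}
    (h : {u} * {v}∗ * {w} ≤ l) (i : ℕ) : u ++ (List.replicate i v).flatten ++ w ∈ l :=
  h <| Language.mem_mul.2 ⟨_, Language.mem_mul.2 ⟨u, rfl, _,
    Language.join_mem_kstar fun _ hy => List.eq_of_mem_replicate hy, rfl⟩, w, rfl, rfl⟩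

section BaseValue

variable {k : ℕ}

theorem foldl_eq_mul_pow_add_baseVal (y : List (Fin k)) (a : ℕ) :
    y.foldl (fun acc d => acc * k + d.val) a = a * k ^ y.length + baseVal k y := by
  induction y generalizing a with
  | nil => simp [baseVal]
  | cons d y ih =>
    rw [List.foldl_cons, ih, show baseVal k (d :: y) = _ from ih (0 * k + d.val),
      List.length_cons]
    ring

theorem baseVal_append (x y : List (Fin k)) :
    baseVal k (x ++ y) = baseVal k x * k ^ y.length + baseVal k y := by
  rw [baseVal, List.foldl_append]
  exact foldl_eq_mul_pow_add_baseVal y _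

theorem baseVal_le_baseVal_append (hk : 1 ≤ k) (x y : List (Fin k)) :
    baseVal k x ≤ baseVal k (x ++ y) := by
  rw [baseVal_append]
  exact le_add_right (Nat.le_mul_of_pos_right _ (Nat.one_le_pow _ _ hk))

theorem baseVal_map_append_append {A R : Type*} [CommRing R] (f : A → Fin k) (u v y : List A) :
    (baseVal k ((u ++ v ++ y).map f) : R) = baseVal k ((u ++ y).map f) +
      ((baseVal k ((u ++ v).map f) : R) - baseVal k (u.map f)) * (k : R) ^ y.length := by
  simp only [List.map_append, List.append_assoc, baseVal_append, List.length_append,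
    List.length_map, pow_add]
  push_cast
  ring

end BaseValue

section Candidates

variable {k : ℕ}

noncomputable def pumpSlope (k : ℕ) (u v : List (Fin k × Fin k)) : ℝ :=
  ((baseVal k ((u ++ v).map Prod.fst) : ℝ) - (baseVal k (u.map Prod.fst) : ℝ)) /
    ((baseVal k ((u ++ v).map Prod.snd) : ℝ) - (baseVal k (u.map Prod.snd) : ℝ))

def shortQuotients (k : ℕ) (L : Language (Fin k × Fin k)) (n : ℕ) : Set ℝ :=
  { r : ℝ | ∃ x ∈ L, x.length < n ∧ r = quoVal k x }

def pumpSlopes (k : ℕ) (L : Language (Fin k × Fin k)) (n : ℕ) : Set ℝ :=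
  { r : ℝ | ∃ u v : List (Fin k × Fin k), (u ++ v).length ≤ n ∧ 1 ≤ v.length ∧
    (∃ w, u ++ v ++ w ∈ L) ∧
    baseVal k (u.map Prod.snd) < baseVal k ((u ++ v).map Prod.snd) ∧ r = pumpSlope k u v }

theorem shortQuotients_finite (L : Language (Fin k × Fin k)) (n : ℕ) :
    (shortQuotients k L n).Finite :=
  ((List.finite_length_lt _ n).image (quoVal k)).subset <| by
    rintro r ⟨x, -, hx, rfl⟩
    exact ⟨x, hx, rfl⟩

theorem pumpSlopes_finite (L : Language (Fin k × Fin k)) (n : ℕ) : (pumpSlopes k L n).Finite :=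
  (((List.finite_length_le _ n).prod (List.finite_length_le _ n)).image
    fun uv => pumpSlope k uv.1 uv.2).subset <| by
    rintro r ⟨u, v, huv, -, -, -, rfl⟩
    rw [List.length_append] at huv
    exact ⟨(u, v), ⟨show u.length ≤ n by omega, show v.length ≤ n by omega⟩, rfl⟩

theorem shortQuotients_union_pumpSlopes_subset_range_ratCast (L : Language (Fin k × Fin k))
    (n : ℕ) : shortQuotients k L n ∪ pumpSlopes k L n ⊆ Set.range ((↑) : ℚ → ℝ) := by
  rintro r (⟨x, -, -, rfl⟩ | ⟨u, v, -, -, -, -, rfl⟩)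
  · exact ⟨(baseVal k (x.map Prod.fst) : ℚ) / baseVal k (x.map Prod.snd), by simp [quoVal]⟩
  · exact ⟨((baseVal k ((u ++ v).map Prod.fst) : ℚ) - baseVal k (u.map Prod.fst)) /
      ((baseVal k ((u ++ v).map Prod.snd) : ℚ) - baseVal k (u.map Prod.snd)),
      by simp [pumpSlope]⟩

end Candidates

section Pumping

variable {k : ℕ} {L : Language (Fin k × Fin k)} {α : ℝ}

theorem pumpSlope_num_le_mul_den (hk : 1 ≤ k) (hpos : ∀ x ∈ L, 0 < baseVal k (x.map Prod.snd))
    (hα : ∀ x ∈ L, quoVal k x ≤ α) {u v w : List (Fin k × Fin k)} (hpump : {u} * {v}∗ * {w} ≤ L) :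
    (baseVal k ((u ++ v).map Prod.fst) : ℝ) - baseVal k (u.map Prod.fst) ≤
      α * ((baseVal k ((u ++ v).map Prod.snd) : ℝ) - baseVal k (u.map Prod.snd)) := by
  set W : ℕ → List (Fin k × Fin k) := fun i => (List.replicate i v).flatten ++ w
  have hmem : ∀ i, u ++ W i ∈ L := fun i => by
    simpa [W] using Language.append_flatten_replicate_append_mem hpump i
  have hW : ∀ i, W (i + 1) = v ++ W i := fun i => by simp [W, List.replicate_succ]
  rw [← sub_nonpos]
  refine nonpos_of_bddAbove_of_eq_add_mul
    (D := fun i => baseVal k ((u ++ W i).map Prod.fst) - α * baseVal k ((u ++ W i).map Prod.snd))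
    (c := fun i => (k : ℝ) ^ (W i).length) ⟨0, ?_⟩ (fun _ => one_le_pow₀ (by exact_mod_cast hk))
    fun i => ?_
  · rintro _ ⟨i, rfl⟩
    have hquo := hα _ (hmem i)
    rw [quoVal, div_le_iff₀ (by exact_mod_cast hpos _ (hmem i))] at hquo
    simp only
    linarith
  · simp only [hW, ← List.append_assoc, baseVal_map_append_append]
    ring

theorem quoVal_le_of_pump (hk : 1 ≤ k) (hpos : ∀ x ∈ L, 0 < baseVal k (x.map Prod.snd))
    (hα : ∀ x ∈ L, quoVal k x ≤ α) {u v w : List (Fin k × Fin k)} (hpump : {u} * {v}∗ * {w} ≤ L) :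
    quoVal k (u ++ v ++ w) ≤ quoVal k (u ++ w) ∨
      (baseVal k (u.map Prod.snd) < baseVal k ((u ++ v).map Prod.snd) ∧ pumpSlope k u v ≤ α ∧
        quoVal k (u ++ v ++ w) ≤ max (quoVal k (u ++ w)) (pumpSlope k u v)) := by
  have hslope := pumpSlope_num_le_mul_den hk hpos hα hpump
  have huw : u ++ w ∈ L := by simpa using Language.append_flatten_replicate_append_mem hpump 0
  have hden : (0 : ℝ) < baseVal k ((u ++ w).map Prod.snd) := by exact_mod_cast hpos _ huw
  have hK : (0 : ℝ) < (k : ℝ) ^ w.length := pow_pos (by exact_mod_cast hk) _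
  rw [quoVal, quoVal, baseVal_map_append_append, baseVal_map_append_append]
  have hmono := baseVal_le_baseVal_append hk (u.map Prod.snd) (v.map Prod.snd)
  rw [← List.map_append] at hmono
  rcases hmono.eq_or_lt with hq | hq
  · left
    rw [← hq, sub_self, mul_zero] at hslope
    rw [← hq, sub_self, zero_mul, add_zero]
    exact div_le_div_of_nonneg_right (by nlinarith) hden.le
  · have hq' : (0 : ℝ) < (baseVal k ((u ++ v).map Prod.snd) : ℝ) - baseVal k (u.map Prod.snd) := by
      rw [sub_pos]; exact_mod_cast hq
    refine Or.inr ⟨hq, (div_le_iff₀ hq').2 hslope, ?_⟩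
    refine (add_div_add_le_max hden (mul_pos hq' hK)).trans_eq ?_
    rw [mul_div_mul_right _ _ hK.ne', pumpSlope]

theorem exists_candidate_ge {σ : Type} [Fintype σ] (hk : 1 ≤ k) (M : DFA (Fin k × Fin k) σ)
    (hpos : ∀ x ∈ M.accepts, 0 < baseVal k (x.map Prod.snd))
    (hα : ∀ x ∈ M.accepts, quoVal k x ≤ α) (x : List (Fin k × Fin k)) (hx : x ∈ M.accepts) :
    ∃ c ∈ shortQuotients k M.accepts (Fintype.card σ) ∪ pumpSlopes k M.accepts (Fintype.card σ),
      quoVal k x ≤ c ∧ c ≤ α := by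
  induction hlen : x.length using Nat.strong_induction_on generalizing x with
  | _ m ih =>
  by_cases hshort : x.length < Fintype.card σ
  · exact ⟨quoVal k x, Or.inl ⟨x, hx, hshort, rfl⟩, le_rfl, hα x hx⟩
  obtain ⟨u, v, w, rfl, huv, hv, hpump⟩ := M.pumping_lemma hx (not_lt.1 hshort)
  have hv' : 1 ≤ v.length := List.length_pos_iff.2 hv
  have huw : u ++ w ∈ M.accepts := by
    simpa using Language.append_flatten_replicate_append_mem hpump 0
  obtain ⟨c, hc, hxc, hcα⟩ := ih (u ++ w).length
    (by simp only [List.length_append] at hlen ⊢; omega) (u ++ w) huw rfl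
  rcases quoVal_le_of_pump hk hpos hα hpump with hle | ⟨hlt, hδα, hle⟩
  · exact ⟨c, hc, hle.trans hxc, hcα⟩
  · refine ⟨max c (pumpSlope k u v), ?_, hle.trans (max_le_max_right _ hxc), max_le hcα hδα⟩
    rcases max_choice c (pumpSlope k u v) with h | h <;> rw [h]
    · exact hc
    · exact Or.inr ⟨u, v, by rwa [List.length_append], hv', ⟨w, hx⟩, hlt, rfl⟩

end Pumping

theorem csSup_mem_of_finite_of_forall_exists_le {β : Type*} [ConditionallyCompleteLinearOrder β]
    {S T : Set β} (hT : T.Finite) (hS : S.Nonempty) (h : ∀ s ∈ S, ∃ t ∈ T, s ≤ t ∧ t ≤ sSup S) :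
    sSup S ∈ T := by
  set T' := T ∩ Set.Iic (sSup S)
  have hT' : T'.Nonempty := by
    obtain ⟨s, hs⟩ := hS
    obtain ⟨t, ht, -, htS⟩ := h s hs
    exact ⟨t, ht, htS⟩
  obtain ⟨hmT, hmS⟩ := hT'.csSup_mem (hT.inter_of_left _)
  have hSm : sSup S ≤ sSup T' := csSup_le hS fun s hs => by
    obtain ⟨t, ht, hst, htS⟩ := h s hs
    exact hst.trans (le_csSup (hT.inter_of_left _).bddAbove ⟨ht, htS⟩)
  rwa [le_antisymm hSm hmS]

theorem sup_quotient_rational_general (k : ℕ) (hk : 2 ≤ k) (σ : Type) [Fintype σ] (n : ℕ)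
    (hn : Fintype.card σ = n) (M : DFA (Fin k × Fin k) σ)
    (L : Language (Fin k × Fin k)) (hL : M.accepts = L)
    (hpos : ∀ x ∈ L, 0 < baseVal k (x.map Prod.snd))
    (hne : ∃ x, x ∈ L)
    (hbdd : BddAbove { r : ℝ | ∃ x ∈ L, r = quoVal k x }) :
    (∃ q : ℚ, (q : ℝ) = sSup { r : ℝ | ∃ x ∈ L, r = quoVal k x }) ∧
    sSup { r : ℝ | ∃ x ∈ L, r = quoVal k x } ∈
      ({ r : ℝ | ∃ x ∈ L, x.length < n ∧ r = quoVal k x } ∪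
       { r : ℝ | ∃ u v : List (Fin k × Fin k), (u ++ v).length ≤ n ∧ 1 ≤ v.length ∧
          (∃ w, u ++ v ++ w ∈ L) ∧
          baseVal k (u.map Prod.snd) < baseVal k ((u ++ v).map Prod.snd) ∧
          r = ((baseVal k ((u ++ v).map Prod.fst) : ℝ) - (baseVal k (u.map Prod.fst) : ℝ)) /
              ((baseVal k ((u ++ v).map Prod.snd) : ℝ) - (baseVal k (u.map Prod.snd) : ℝ)) }) := by
  subst hn hL
  have hmem : sSup { r : ℝ | ∃ x ∈ M.accepts, r = quoVal k x } ∈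
      shortQuotients k M.accepts (Fintype.card σ) ∪ pumpSlopes k M.accepts (Fintype.card σ) := by
    refine csSup_mem_of_finite_of_forall_exists_le
      ((shortQuotients_finite _ _).union (pumpSlopes_finite _ _)) ?_ ?_
    · obtain ⟨x, hx⟩ := hne
      exact ⟨_, x, hx, rfl⟩
    · rintro _ ⟨x, hx, rfl⟩
      exact exists_candidate_ge (by omega) M hpos (fun y hy => le_csSup hbdd ⟨y, hy, rfl⟩) x hx
  obtain ⟨q, hq⟩ := shortQuotients_union_pumpSlopes_subset_range_ratCast _ _ hmem
  exact ⟨⟨q, hq⟩, hmem⟩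

theorem sup_quotient_rational (k : ℕ) (hk : 2 ≤ k) (σ : Type) [Fintype σ] (n : ℕ)
    (hn : Fintype.card σ = n) (M : DFA (Fin k × Fin k) σ)
    (L : Language (Fin k × Fin k)) (hL : M.accepts = L)
    (hlead : ∀ x ∈ L, ∀ (d : Fin k × Fin k) (y : List (Fin k × Fin k)),
      x = d :: y → d.1.val ≠ 0 ∨ d.2.val ≠ 0)
    (hpos : ∀ x ∈ L, 0 < baseVal k (x.map Prod.snd))
    (hne : ∃ x, x ∈ L)
    (hbdd : BddAbove { r : ℝ | ∃ x ∈ L, r = quoVal k x }) :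
    (∃ q : ℚ, (q : ℝ) = sSup { r : ℝ | ∃ x ∈ L, r = quoVal k x }) ∧
    sSup { r : ℝ | ∃ x ∈ L, r = quoVal k x } ∈
      ({ r : ℝ | ∃ x ∈ L, x.length < n ∧ r = quoVal k x } ∪
       { r : ℝ | ∃ u v : List (Fin k × Fin k), (u ++ v).length ≤ n ∧ 1 ≤ v.length ∧
          (∃ w, u ++ v ++ w ∈ L) ∧
          baseVal k (u.map Prod.snd) < baseVal k ((u ++ v).map Prod.snd) ∧
          r = ((baseVal k ((u ++ v).map Prod.fst) : ℝ) - (baseVal k (u.map Prod.fst) : ℝ)) /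
              ((baseVal k ((u ++ v).map Prod.snd) : ℝ) - (baseVal k (u.map Prod.snd) : ℝ)) }) :=
  sup_quotient_rational_general k hk σ n hn M L hL hpos hne hbdd
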